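/- (Regret bound for deterministic rested rising bandits.) Under the rising rested deterministic setting, the regret of the optimistic algorithm using index $B_i(t) = \overline{\mu}_i(t) = \mu_i(N_{i,t-1}) + (t - N_{i,t-1})\gamma_i(N_{i,t-1}-1)$ (and $+\infty$ when $N_{i,t-1} < 2$) satisfies, for every $q \in [0,1]$: $R_{\bm\mu}(T) \le 2K + K T^q\, \Upsilon_{\bm\mu}(\lceil T/K \rceil, q)$. -/

import Mathlib

/-!
Fix a comparator arm `a`. In a round whose pulled arm has fewer than two pulls the loss
`μ_a(t) - μ_{I_t}(N_{I_t,t})` is at most `1`, and there are at most `2K` such rounds. In every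
other round all arms have two pulls, so concavity makes the index optimistic,
`μ_a(t) ≤ B_a(t) ≤ B_{I_t}(t)`, while `B_{I_t}(t)` overshoots the reward actually collected by at
most `T γ_{I_t}(n - 1)`; hence the loss is at most `min 1 (T γ) ≤ T^q γ^q`. Indexing the rounds
by (arm, pull number), arm `i` contributes the first `N_{i,T} - 2` terms of `l ↦ max_j γ_j(l)^q`,
a non-increasing sequence, and `∑ i, (N_{i,T} - 2) ≤ K (⌈T/K⌉ - 1)`, so the total is at most
`K` times the first `⌈T/K⌉ - 1` terms.
-/

open Finset

section Counting

variable {α : Type*} [DecidableEq α]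

def pullCount (I : ℕ → α) (i : α) (t : ℕ) : ℕ := #{s ∈ Icc 1 t | I s = i}

@[simp]
lemma pullCount_zero (I : ℕ → α) (i : α) : pullCount I i 0 = 0 := rfl

lemma pullCount_succ (I : ℕ → α) (i : α) (t : ℕ) :
    pullCount I i (t + 1) = pullCount I i t + if I (t + 1) = i then 1 else 0 := by
  simp only [pullCount, card_filter]
  exact sum_Icc_succ_top (Nat.le_add_left 1 t) _

lemma pullCount_self (I : ℕ → α) {t : ℕ} (ht : 0 < t) :
    pullCount I (I t) t = pullCount I (I t) (t - 1) + 1 := by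
  obtain ⟨s, rfl⟩ := Nat.exists_eq_add_one_of_ne_zero ht.ne'
  simp [pullCount_succ]

lemma pullCount_le (I : ℕ → α) (i : α) (t : ℕ) : pullCount I i t ≤ t :=
  (card_filter_le _ _).trans (by simp)

lemma pullCount_mono (I : ℕ → α) (i : α) : Monotone (pullCount I i) :=
  monotone_nat_of_le_succ fun t => by simp [pullCount_succ]

lemma sum_pullCount [Fintype α] (I : ℕ → α) (t : ℕ) : ∑ i, pullCount I i t = t := by
  have := card_eq_sum_card_fiberwise (s := Icc 1 t) fun s _ => mem_univ (I s)
  simpa [pullCount] using this.symm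

lemma sum_Icc_eq_sum_sum_range_pullCount [Fintype α] {M : Type*} [AddCommMonoid M]
    (I : ℕ → α) (g : α → ℕ → M) (T : ℕ) :
    ∑ t ∈ Icc 1 T, g (I t) (pullCount I (I t) (t - 1)) =
      ∑ i, ∑ n ∈ range (pullCount I i T), g i n := by
  induction T with
  | zero => simp
  | succ T ih =>
    have hstep : ∀ i, ∑ n ∈ range (pullCount I i (T + 1)), g i n =
        ∑ n ∈ range (pullCount I i T), g i n +
          if I (T + 1) = i then g i (pullCount I i T) else 0 := by
      intro i
      rw [pullCount_succ]
      split_ifs <;> simp [sum_range_succ]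
    rw [sum_Icc_succ_top (Nat.le_add_left 1 T), ih, sum_congr rfl fun i _ => hstep i,
      sum_add_distrib, sum_ite_eq]
    simp

lemma pullCount_le_two_of_lt_two {I : ℕ → α} {T : ℕ}
    (hexplore : ∀ t ∈ Icc 1 T,
      (∃ j, pullCount I j (t - 1) < 2) → pullCount I (I t) (t - 1) < 2)
    {j : α} (hj : pullCount I j T < 2) (i : α) : pullCount I i T ≤ 2 := by
  suffices ∀ t ≤ T, pullCount I i t ≤ 2 from this T le_rfl
  intro t
  induction t with
  | zero => simp
  | succ t ih =>
    intro ht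
    have hpulled : pullCount I (I (t + 1)) t < 2 := by
      simpa using hexplore (t + 1) (mem_Icc.2 ⟨by omega, ht⟩)
        ⟨j, (pullCount_mono I j (by omega)).trans_lt hj⟩
    rw [pullCount_succ]
    split_ifs with h
    · rw [← h]; omega
    · simpa using ih (by omega)

end Counting

lemma le_mul_ceil_div {K : ℕ} (hK : 0 < K) (T : ℕ) : T ≤ K * ⌈(T : ℝ) / K⌉₊ := by
  have : (T : ℝ) ≤ K * ⌈(T : ℝ) / K⌉₊ := by
    rw [← div_le_iff₀' (by exact_mod_cast hK)]
    exact Nat.le_ceil _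
  exact_mod_cast this

lemma sum_pullCount_sub_two_le {K T : ℕ} (hK : 0 < K) {I : ℕ → Fin K}
    (hexplore : ∀ t ∈ Icc 1 T,
      (∃ j, pullCount I j (t - 1) < 2) → pullCount I (I t) (t - 1) < 2) :
    ∑ i, (pullCount I i T - 2) ≤ K * (⌈(T : ℝ) / K⌉₊ - 1) := by
  by_cases h2 : ∀ j, 2 ≤ pullCount I j T
  · have hsum : ∑ i, (pullCount I i T - 2) = T - 2 * K := by
      rw [sum_tsub_distrib _ fun i _ => h2 i, sum_pullCount]
      simp [mul_comm]
    have := le_mul_ceil_div hK T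
    rw [hsum, Nat.mul_sub_one]
    omega
  · obtain ⟨j, hj⟩ := not_forall.1 h2
    simp [Nat.sub_eq_zero_of_le (pullCount_le_two_of_lt_two hexplore (not_le.1 hj) _)]

lemma le_add_mul_of_antitone_increments {μ : ℕ → ℝ} (hγ : Antitone fun n => μ (n + 1) - μ n)
    {k m : ℕ} (hkm : k ≤ m) (d : ℕ) : μ (m + d) ≤ μ m + d * (μ (k + 1) - μ k) := by
  induction d with
  | zero => simp
  | succ d ih =>
    have := hγ (show k ≤ m + d by omega)
    simp only [← add_assoc, Nat.cast_add_one] at this ⊢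
    linarith

lemma antitone_sup'_rpow_increments {ι : Type*} {s : Finset ι} (hs : s.Nonempty) {q : ℝ}
    (hq : 0 ≤ q) {μ : ι → ℕ → ℝ} (hμ : ∀ i, Monotone (μ i))
    (hγ : ∀ i, Antitone fun n => μ i (n + 1) - μ i n) :
    Antitone fun l => s.sup' hs fun i => (μ i (l + 1) - μ i l) ^ q := fun _ k hjk =>
  sup'_le _ _ fun i hi => le_sup'_of_le _ hi <|
    Real.rpow_le_rpow (sub_nonneg.2 (hμ i k.le_succ)) (hγ i hjk) hq

/-- The index `B_i(t)` of the paper, with `n = N_{i,t-1}`: the last increment extrapolated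
linearly up to time `t`. -/
def optIndex (μ : ℕ → ℝ) (n t : ℕ) : ℝ := μ n + ((t : ℝ) - n) * (μ n - μ (n - 1))

lemma le_optIndex {μ : ℕ → ℝ} (hγ : Antitone fun n => μ (n + 1) - μ n) {n t : ℕ}
    (hn : 1 ≤ n) (hnt : n ≤ t) : μ t ≤ optIndex μ n t := by
  have := le_add_mul_of_antitone_increments hγ (Nat.sub_le n 1) (t - n)
  rwa [Nat.add_sub_cancel' hnt, Nat.sub_add_cancel hn, Nat.cast_sub hnt] at this

lemma min_one_le_rpow {x q : ℝ} (hx : 0 ≤ x) (hq0 : 0 ≤ q) (hq1 : q ≤ 1) :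
    min 1 x ≤ x ^ q := by
  rcases le_total x 1 with h | h
  · exact (min_le_right _ _).trans (Real.self_le_rpow_of_le_one hx h hq1)
  · exact (min_le_left _ _).trans (Real.one_le_rpow h hq0)

lemma sub_le_rpow_of_optIndex_le {μa μb : ℕ → ℝ} {na nb t T : ℕ} {q : ℝ}
    (hq0 : 0 ≤ q) (hq1 : q ≤ 1)
    (hγa : Antitone fun n => μa (n + 1) - μa n) (hμb : Monotone μb)
    (ha : μa t ≤ 1) (hb : 0 ≤ μb (nb + 1)) (hna : 1 ≤ na) (hnat : na ≤ t) (htT : t ≤ T)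
    (hidx : optIndex μa na t ≤ optIndex μb nb t) :
    μa t - μb (nb + 1) ≤ T ^ q * (μb nb - μb (nb - 1)) ^ q := by
  have hγb : 0 ≤ μb nb - μb (nb - 1) := sub_nonneg.2 (hμb (Nat.sub_le nb 1))
  have hgap : μa t - μb (nb + 1) ≤ T * (μb nb - μb (nb - 1)) :=
    calc μa t - μb (nb + 1) ≤ optIndex μb nb t - μb nb := by
          linarith [le_optIndex hγa hna hnat, hμb nb.le_succ]
      _ = (t - nb) * (μb nb - μb (nb - 1)) := by unfold optIndex; ring
      _ ≤ T * (μb nb - μb (nb - 1)) := by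
          gcongr
          have : (t : ℝ) ≤ T := by exact_mod_cast htT
          linarith [(Nat.cast_nonneg nb : (0 : ℝ) ≤ nb)]
  calc μa t - μb (nb + 1) ≤ min 1 (T * (μb nb - μb (nb - 1))) := le_min (by linarith) hgap
    _ ≤ (T * (μb nb - μb (nb - 1))) ^ q := min_one_le_rpow (by positivity) hq0 hq1
    _ = T ^ q * (μb nb - μb (nb - 1)) ^ q := Real.mul_rpow (Nat.cast_nonneg T) hγb

/-- Loss of one round `t`, where arm `j` has been pulled `n j` times before and arm `b` is
pulled according to the selection rule `hexplore`/`hexploit`. -/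
lemma round_regret_le {α : Type*} {T t : ℕ} {q : ℝ} (hq0 : 0 ≤ q) (hq1 : q ≤ 1)
    {μ : α → ℕ → ℝ} (hrange : ∀ i n, μ i n ∈ Set.Icc (0 : ℝ) 1) (hμ : ∀ i, Monotone (μ i))
    (hγ : ∀ i, Antitone fun n => μ i (n + 1) - μ i n)
    {f : ℕ → ℝ} (hf : ∀ i l, (μ i (l + 1) - μ i l) ^ q ≤ f l)
    {n : α → ℕ} {a b : α} (hna : n a < t) (htT : t ≤ T)
    (hexplore : (∃ j, n j < 2) → n b < 2)
    (hexploit : (∀ j, 2 ≤ n j) → ∀ j, optIndex (μ j) (n j) t ≤ optIndex (μ b) (n b) t) :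
    μ a t - μ b (n b + 1) ≤ if n b < 2 then 1 else T ^ q * f (n b - 1) := by
  split_ifs with hb
  · linarith [(hrange a t).2, (hrange b (n b + 1)).1]
  have hall : ∀ j, 2 ≤ n j := fun j => by_contra fun hj => hb (hexplore ⟨j, not_le.1 hj⟩)
  have hfb := hf b (n b - 1)
  rw [Nat.sub_add_cancel (one_le_two.trans (hall b))] at hfb
  calc μ a t - μ b (n b + 1) ≤ T ^ q * (μ b (n b) - μ b (n b - 1)) ^ q :=
        sub_le_rpow_of_optIndex_le hq0 hq1 (hγ a) (hμ b) (hrange a t).2 (hrange b _).1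
          (one_le_two.trans (hall a)) hna.le htT (hexploit hall a)
    _ ≤ T ^ q * f (n b - 1) := by gcongr

lemma sum_Icc_le_sum_Icc_add_mul {f : ℕ → ℝ} (hf : Antitone f) (k m : ℕ) :
    ∑ l ∈ Icc 1 k, f l ≤ ∑ l ∈ Icc 1 m, f l + ((k : ℝ) - m) * f m := by
  have hIoc : ∀ j, Icc 1 j = Ioc 0 j := Icc_add_one_left_eq_Ioc 0
  rw [hIoc, hIoc]
  rcases le_total k m with h | h
  · rw [← sum_Ioc_consecutive f (Nat.zero_le k) h]
    have := card_nsmul_le_sum (Ioc k m) f (f m) fun l hl => hf (mem_Ioc.1 hl).2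
    rw [nsmul_eq_mul, Nat.card_Ioc, Nat.cast_sub h] at this
    linarith
  · rw [← sum_Ioc_consecutive f (Nat.zero_le m) h]
    have := sum_le_card_nsmul (Ioc m k) f (f m) fun l hl => hf (mem_Ioc.1 hl).1.le
    rw [nsmul_eq_mul, Nat.card_Ioc, Nat.cast_sub h] at this
    linarith

lemma sum_sum_Icc_le_card_mul {ι : Type*} {s : Finset ι} {f : ℕ → ℝ} (hf : Antitone f)
    (hf0 : ∀ l, 0 ≤ f l) {n : ι → ℕ} {m : ℕ} (hn : ∑ i ∈ s, n i ≤ #s * m) :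
    ∑ i ∈ s, ∑ l ∈ Icc 1 (n i), f l ≤ #s * ∑ l ∈ Icc 1 m, f l := by
  have hn' : (∑ i ∈ s, (n i : ℝ)) - #s * m ≤ 0 := by
    rw [sub_nonpos]; exact_mod_cast hn
  calc ∑ i ∈ s, ∑ l ∈ Icc 1 (n i), f l
      ≤ ∑ i ∈ s, (∑ l ∈ Icc 1 m, f l + ((n i : ℝ) - m) * f m) :=
        sum_le_sum fun i _ => sum_Icc_le_sum_Icc_add_mul hf (n i) m
    _ = #s * ∑ l ∈ Icc 1 m, f l + ((∑ i ∈ s, (n i : ℝ)) - #s * m) * f m := by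
        rw [sum_add_distrib, ← sum_mul, sum_sub_distrib]
        simp
    _ ≤ #s * ∑ l ∈ Icc 1 m, f l := by nlinarith [hf0 m]

lemma sum_range_ite_lt_two_le {x : ℝ} (hx : 0 ≤ x) (y : ℕ → ℝ) (N : ℕ) :
    ∑ n ∈ range N, (if n < 2 then x else y (n - 1)) ≤ 2 * x + ∑ l ∈ Icc 1 (N - 2), y l := by
  rcases N with _ | _ | N
  · simp [hx]
  · simp [two_mul, hx]
  · have hshift : ∑ l ∈ Icc 1 N, y l = ∑ n ∈ range N, y (n + 1) := by
      rw [range_eq_Ico, sum_Ico_add', zero_add, Ico_add_one_right_eq_Icc]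
    have htail : ∀ n ∈ range N, (if n + 1 + 1 < 2 then x else y (n + 1 + 1 - 1)) = y (n + 1) :=
      fun n _ => if_neg (by omega)
    rw [sum_range_succ', sum_range_succ', sum_congr rfl htail, if_pos (by norm_num),
      if_pos (by norm_num), show N + 1 + 1 - 2 = N by omega, hshift]
    linarith

lemma sum_sum_range_ite_le {ι : Type*} {s : Finset ι} {f : ℕ → ℝ} (hf : Antitone f)
    (hf0 : ∀ l, 0 ≤ f l) {c : ℝ} (hc : 0 ≤ c) {n : ι → ℕ} {m : ℕ}
    (hn : ∑ i ∈ s, (n i - 2) ≤ #s * m) :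
    ∑ i ∈ s, ∑ k ∈ range (n i), (if k < 2 then 1 else c * f (k - 1)) ≤
      2 * #s + c * (#s * ∑ l ∈ Icc 1 m, f l) :=
  calc ∑ i ∈ s, ∑ k ∈ range (n i), (if k < 2 then 1 else c * f (k - 1))
      ≤ ∑ i ∈ s, (2 * 1 + ∑ l ∈ Icc 1 (n i - 2), c * f l) :=
        sum_le_sum fun i _ => sum_range_ite_lt_two_le zero_le_one (fun l => c * f l) _
    _ = 2 * #s + c * ∑ i ∈ s, ∑ l ∈ Icc 1 (n i - 2), f l := by
        simp only [sum_add_distrib, mul_sum, sum_const, nsmul_eq_mul]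
        ring
    _ ≤ 2 * #s + c * (#s * ∑ l ∈ Icc 1 m, f l) := by
        gcongr
        exact sum_sum_Icc_le_card_mul hf hf0 hn

/-- Regret bound for `R-ed-UCB` in the deterministic rested rising bandit setting.
`I t` is the arm pulled at round `t`, `N i t` the number of pulls of arm `i` in rounds
`1..t`, and `B i t` the optimistic index (which is treated as `+∞` when `N i (t-1) < 2`,
encoded by the hypotheses `hopt1`/`hopt2` describing the argmax rule). -/
theorem stmt_18 (K T : ℕ) (hK : 0 < K) (q : ℝ) (hq0 : 0 ≤ q) (hq1 : q ≤ 1)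
    (μ : Fin K → ℕ → ℝ) (hrange : ∀ i n, μ i n ∈ Set.Icc (0 : ℝ) 1)
    (hincr : ∀ i n, 0 ≤ μ i (n + 1) - μ i n)
    (hconc : ∀ i n, μ i (n + 2) - μ i (n + 1) ≤ μ i (n + 1) - μ i n)
    (I : ℕ → Fin K)
    (N : Fin K → ℕ → ℕ)
    (hN : ∀ i t, N i t = ((Finset.Icc 1 t).filter fun s => I s = i).card)
    (B : Fin K → ℕ → ℝ)
    (hB : ∀ i t, B i t = μ i (N i (t - 1)) +
      ((t : ℝ) - (N i (t - 1) : ℝ)) * (μ i (N i (t - 1)) - μ i (N i (t - 1) - 1)))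
    (hopt1 : ∀ t ∈ Finset.Icc 1 T, (∃ j, N j (t - 1) < 2) → N (I t) (t - 1) < 2)
    (hopt2 : ∀ t ∈ Finset.Icc 1 T, (∀ j, 2 ≤ N j (t - 1)) → ∀ j, B j t ≤ B (I t) t) :
    (Finset.univ.sup' (Finset.univ_nonempty_iff.mpr (Fin.pos_iff_nonempty.mp hK))
        fun i => ∑ l ∈ Finset.Icc 1 T, μ i l) -
      (∑ t ∈ Finset.Icc 1 T, μ (I t) (N (I t) t)) ≤
    2 * (K : ℝ) + (K : ℝ) * (T : ℝ) ^ q *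
      ∑ l ∈ Finset.Icc 1 (⌈(T : ℝ) / (K : ℝ)⌉₊ - 1),
        (Finset.univ.sup' (Finset.univ_nonempty_iff.mpr (Fin.pos_iff_nonempty.mp hK))
          fun i => (μ i (l + 1) - μ i l) ^ q) := by
  obtain rfl : N = pullCount I := funext₂ hN
  obtain rfl : B = fun i t => optIndex (μ i) (pullCount I i (t - 1)) t := funext₂ hB
  have hμ i : Monotone (μ i) := monotone_nat_of_le_succ fun n => sub_nonneg.1 (hincr i n)
  have hγ i : Antitone fun n => μ i (n + 1) - μ i n := antitone_nat_of_succ_le (hconc i)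
  set f : ℕ → ℝ := fun l => univ.sup' (univ_nonempty_iff.mpr (Fin.pos_iff_nonempty.mp hK))
    fun i => (μ i (l + 1) - μ i l) ^ q
  have hf i l : (μ i (l + 1) - μ i l) ^ q ≤ f l :=
    le_sup' (fun i => (μ i (l + 1) - μ i l) ^ q) (mem_univ i)
  have hf0 l : 0 ≤ f l := (Real.rpow_nonneg (hincr ⟨0, hK⟩ l) q).trans (hf _ l)
  have hpulls :
      ∑ i, (pullCount I i T - 2) ≤ #(univ : Finset (Fin K)) * (⌈(T : ℝ) / K⌉₊ - 1) := by
    rw [card_univ, Fintype.card_fin]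
    exact sum_pullCount_sub_two_le hK hopt1
  rw [sub_le_iff_le_add, sup'_le_iff]
  intro a _
  rw [← sub_le_iff_le_add, ← sum_sub_distrib]
  set g : ℕ → ℝ := fun n => if n < 2 then 1 else (T : ℝ) ^ q * f (n - 1)
  calc ∑ t ∈ Icc 1 T, (μ a t - μ (I t) (pullCount I (I t) t))
      ≤ ∑ t ∈ Icc 1 T, g (pullCount I (I t) (t - 1)) := by
        refine sum_le_sum fun t ht => ?_
        obtain ⟨ht1, htT⟩ := mem_Icc.1 ht
        rw [pullCount_self I ht1]
        exact round_regret_le hq0 hq1 hrange hμ hγ hf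
          ((pullCount_le I a _).trans_lt (by omega)) htT (hopt1 t ht) (hopt2 t ht)
    _ = ∑ i, ∑ n ∈ range (pullCount I i T), g n :=
        sum_Icc_eq_sum_sum_range_pullCount I (fun _ => g) T
    _ ≤ 2 * K + (T : ℝ) ^ q * (K * ∑ l ∈ Icc 1 (⌈(T : ℝ) / K⌉₊ - 1), f l) := by
        have := sum_sum_range_ite_le (antitone_sup'_rpow_increments _ hq0 hμ hγ) hf0
          (Real.rpow_nonneg (Nat.cast_nonneg T) q) hpulls
        rwa [card_univ, Fintype.card_fin] at this
    _ = 2 * K + K * (T : ℝ) ^ q * ∑ l ∈ Icc 1 (⌈(T : ℝ) / K⌉₊ - 1), f l := by ring
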